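/- The network polynomial of a complete and decomposable SPN is a multilinear function of the edge weights w with nonnegative (positive) coefficients on each monomial: each edge weight appears at most once in each monomial of the induced-tree expansion. -/

import Mathlib

open scoped Classical

/-- The kind of a node in a sum-product network. -/
inductive NodeKind | sum | prod | leaf
deriving DecidableEq

/-- A sum-product network (SPN) over variables `X_1, …, X_n`: a rooted DAG with `N` nodes
(indexed so that edges go from larger to smaller indices), where each node is a sum node,
a product node, or a leaf labelled with a variable, and sum edges carry weights. -/
structure SPN (N n : ℕ) where
  kind : Fin N → NodeKind
  children : Fin N → Finset (Fin N)
  var : Fin N → Fin n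
  root : Fin N
  child_lt : ∀ k, ∀ j ∈ children k, j < k
  leaf_iff : ∀ k, kind k = NodeKind.leaf ↔ children k = ∅

namespace SPN

variable {N n : ℕ}

/-- Recursive evaluation of an SPN: leaves return their given values, product nodes multiply
their children's values, sum nodes take weighted sums of their children's values. -/
noncomputable def value (S : SPN N n) (leaf : Fin N → ℝ) (w : Fin N → Fin N → ℝ) :
    Fin N → ℝ
  | k =>
    match S.kind k with
    | NodeKind.leaf => leaf k
    | NodeKind.prod => ∏ j ∈ (S.children k).attach, value S leaf w j.1
    | NodeKind.sum => ∑ j ∈ (S.children k).attach, w k j.1 * value S leaf w j.1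
  termination_by k => (k : ℕ)
  decreasing_by all_goals exact S.child_lt _ _ j.2

/-- Evaluation where the value of the node `k₀` is overridden by the free value `t`
(used to differentiate the root value with respect to the value of node `k₀`). -/
noncomputable def valueAt (S : SPN N n) (leaf : Fin N → ℝ) (w : Fin N → Fin N → ℝ)
    (k₀ : Fin N) (t : ℝ) : Fin N → ℝ
  | k =>
    if k = k₀ then t else
      match S.kind k with
      | NodeKind.leaf => leaf k
      | NodeKind.prod => ∏ j ∈ (S.children k).attach, valueAt S leaf w k₀ t j.1
      | NodeKind.sum => ∑ j ∈ (S.children k).attach, w k j.1 * valueAt S leaf w k₀ t j.1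
  termination_by k => (k : ℕ)
  decreasing_by all_goals exact S.child_lt _ _ j.2

/-- The scope of a node: the set of variables appearing below it. -/
noncomputable def scope (S : SPN N n) : Fin N → Finset (Fin n)
  | k =>
    match S.kind k with
    | NodeKind.leaf => {S.var k}
    | _ => (S.children k).attach.biUnion (fun j => scope S j.1)
  termination_by k => (k : ℕ)
  decreasing_by all_goals exact S.child_lt _ _ j.2

/-- An SPN is complete if all children of a sum node have the same scope. -/
def Complete (S : SPN N n) : Prop :=
  ∀ k, S.kind k = NodeKind.sum →
    ∀ j₁ ∈ S.children k, ∀ j₂ ∈ S.children k, S.scope j₁ = S.scope j₂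

/-- An SPN is decomposable if distinct children of a product node have disjoint scopes. -/
def Decomposable (S : SPN N n) : Prop :=
  ∀ k, S.kind k = NodeKind.prod →
    ∀ j₁ ∈ S.children k, ∀ j₂ ∈ S.children k, j₁ ≠ j₂ →
      Disjoint (S.scope j₁) (S.scope j₂)

/-- `(TV, TE)` is an induced tree of the SPN `S`: it contains the root; its edges are edges of
`S` between its nodes; every sum node in it has exactly one outgoing edge in it; every product
node in it keeps all its outgoing edges; and every non-root node in it is the endpoint of one
of its edges. -/
def IsInducedTree (S : SPN N n) (TV : Finset (Fin N)) (TE : Finset (Fin N × Fin N)) : Prop :=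
  S.root ∈ TV ∧
  (∀ e ∈ TE, e.1 ∈ TV ∧ e.2 ∈ TV ∧ e.2 ∈ S.children e.1) ∧
  (∀ k ∈ TV, S.kind k = NodeKind.sum → ∃! j, j ∈ S.children k ∧ (k, j) ∈ TE) ∧
  (∀ k ∈ TV, S.kind k = NodeKind.prod → ∀ j ∈ S.children k, (k, j) ∈ TE) ∧
  (∀ k ∈ TV, k ≠ S.root → ∃ e ∈ TE, e.2 = k)

end SPN

/-! Fix all weights but `w k j = t`. By induction over the DAG, the value of every node is
`a t + b` with `a, b ≥ 0`, and `a ≠ 0` only at nodes `m ≥ k` whose scope contains that of `k`.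
Sums of such functions are again of this form. A product is too, because at most one factor
can have nonzero slope: by decomposability the children of a product node have disjoint scopes,
so no two of them both contain the nonempty scope of `k`. At the sum node `k` itself, the children
lie below `k`, so their values are constant and `t` enters only linearly. -/

def IsNonnegAffine (p : Prop) (f : ℝ → ℝ) : Prop :=
  ∃ a b : ℝ, 0 ≤ a ∧ 0 ≤ b ∧ (a ≠ 0 → p) ∧ ∀ t, f t = a * t + b

namespace IsNonnegAffine

variable {p q : Prop} {f g : ℝ → ℝ}

lemma const (p : Prop) {b : ℝ} (hb : 0 ≤ b) : IsNonnegAffine p fun _ => b :=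
  ⟨0, b, le_rfl, hb, fun h => absurd rfl h, fun t => by ring⟩

lemma ite_id (p : Prop) [Decidable p] {b : ℝ} (hb : 0 ≤ b) :
    IsNonnegAffine p fun t => if p then t else b := by
  by_cases hp : p
  · exact ⟨1, 0, zero_le_one, le_rfl, fun _ => hp, fun t => by simp [hp]⟩
  · simpa [hp] using const p hb

lemma mono (hf : IsNonnegAffine p f) (hpq : p → q) : IsNonnegAffine q f := by
  obtain ⟨a, b, ha, hb, hap, hf⟩ := hf
  exact ⟨a, b, ha, hb, hpq ∘ hap, hf⟩

lemma add (hf : IsNonnegAffine p f) (hg : IsNonnegAffine q g) :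
    IsNonnegAffine (p ∨ q) fun t => f t + g t := by
  obtain ⟨a, b, ha, hb, hap, hf⟩ := hf
  obtain ⟨c, d, hc, hd, hcq, hg⟩ := hg
  refine ⟨a + c, b + d, add_nonneg ha hc, add_nonneg hb hd, fun hac => ?_, fun t => ?_⟩
  · by_cases ha0 : a = 0
    · exact Or.inr (hcq fun hc0 => hac (by rw [ha0, hc0, add_zero]))
    · exact Or.inl (hap ha0)
  · simp only [hf, hg]; ring

lemma mul (hf : IsNonnegAffine p f) (hg : IsNonnegAffine q g) (hpq : ¬(p ∧ q)) :
    IsNonnegAffine (p ∨ q) fun t => f t * g t := by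
  obtain ⟨a, b, ha, hb, hap, hf⟩ := hf
  obtain ⟨c, d, hc, hd, hcq, hg⟩ := hg
  have hac : a * c = 0 := by
    by_contra h
    exact hpq ⟨hap (left_ne_zero_of_mul h), hcq (right_ne_zero_of_mul h)⟩
  refine ⟨a * d + b * c, b * d, by positivity, by positivity, fun h => ?_, fun t => ?_⟩
  · by_cases ha0 : a = 0
    · exact Or.inr (hcq fun hc0 => h (by rw [ha0, hc0, zero_mul, mul_zero, add_zero]))
    · exact Or.inl (hap ha0)
  · simp only [hf, hg]
    linear_combination t * t * hac

variable {ι : Type*} {s : Finset ι} {P : ι → Prop} {F : ι → ℝ → ℝ}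

lemma sum (hF : ∀ i ∈ s, IsNonnegAffine (P i) (F i)) :
    IsNonnegAffine (∃ i ∈ s, P i) fun t => ∑ i ∈ s, F i t := by
  induction s using Finset.induction_on with
  | empty => simpa using const False le_rfl
  | insert i s hi ih =>
    simp only [Finset.sum_insert hi, Finset.exists_mem_insert]
    exact (hF i (s.mem_insert_self i)).add (ih fun i' hi' => hF i' (s.mem_insert_of_mem hi'))

lemma prod (hF : ∀ i ∈ s, IsNonnegAffine (P i) (F i))
    (hP : (s : Set ι).Pairwise fun i i' => ¬(P i ∧ P i')) :
    IsNonnegAffine (∃ i ∈ s, P i) fun t => ∏ i ∈ s, F i t := by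
  induction s using Finset.induction_on with
  | empty => simpa using const False zero_le_one
  | insert i s hi ih =>
    rw [Finset.coe_insert, Set.pairwise_insert] at hP
    simp only [Finset.prod_insert hi, Finset.exists_mem_insert]
    refine (hF i (s.mem_insert_self i)).mul
      (ih (fun i' hi' => hF i' (s.mem_insert_of_mem hi')) hP.1) ?_
    rintro ⟨hPi, i', hi', hPi'⟩
    exact (hP.2 i' hi' fun h => hi (h ▸ hi')).1 ⟨hPi, hPi'⟩

end IsNonnegAffine

namespace SPN

variable {N n : ℕ} (S : SPN N n)

lemma value_of_kind_leaf (leaf : Fin N → ℝ) (w : Fin N → Fin N → ℝ) {m : Fin N}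
    (h : S.kind m = NodeKind.leaf) : S.value leaf w m = leaf m := by
  rw [value, h]

lemma value_of_kind_sum (leaf : Fin N → ℝ) (w : Fin N → Fin N → ℝ) {m : Fin N}
    (h : S.kind m = NodeKind.sum) :
    S.value leaf w m = ∑ x ∈ S.children m, w m x * S.value leaf w x := by
  rw [value, h, Finset.sum_attach (S.children m) fun x => w m x * S.value leaf w x]

lemma value_of_kind_prod (leaf : Fin N → ℝ) (w : Fin N → Fin N → ℝ) {m : Fin N}
    (h : S.kind m = NodeKind.prod) :
    S.value leaf w m = ∏ x ∈ S.children m, S.value leaf w x := by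
  rw [value, h, Finset.prod_attach (S.children m) fun x => S.value leaf w x]

lemma scope_subset_of_mem_children {x m : Fin N} (hx : x ∈ S.children m) :
    S.scope x ⊆ S.scope m := by
  have hm : S.kind m ≠ NodeKind.leaf := by
    rw [Ne, S.leaf_iff]
    exact Finset.ne_empty_of_mem hx
  rw [scope.eq_1 S m]
  split
  · contradiction
  all_goals
    exact Finset.subset_biUnion_of_mem (fun y => S.scope y.1) (Finset.mem_attach _ ⟨x, hx⟩)

lemma scope_nonempty (m : Fin N) : (S.scope m).Nonempty := by
  induction m using WellFoundedLT.induction with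
  | _ m ih =>
  by_cases hm : S.kind m = NodeKind.leaf
  · rw [scope, hm]
    exact Finset.singleton_nonempty _
  · obtain ⟨x, hx⟩ := Finset.nonempty_iff_ne_empty.mpr fun h => hm ((S.leaf_iff m).mpr h)
    exact (ih x (S.child_lt m x hx)).mono (S.scope_subset_of_mem_children hx)

lemma isNonnegAffine_value_update_weight (hD : S.Decomposable)
    (leaf : Fin N → ℝ) (hleaf : ∀ k, 0 ≤ leaf k)
    (w : Fin N → Fin N → ℝ) (hw : ∀ k j, 0 ≤ w k j) (k j m : Fin N) :
    IsNonnegAffine (k ≤ m ∧ S.scope k ⊆ S.scope m) fun t =>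
      S.value leaf (fun k' j' => if k' = k ∧ j' = j then t else w k' j') m := by
  induction m using WellFoundedLT.induction with
  | _ m ih =>
  have hdesc : ∀ x ∈ S.children m,
      k ≤ x ∧ S.scope k ⊆ S.scope x → k ≤ m ∧ S.scope k ⊆ S.scope m := fun x hx h =>
    ⟨h.1.trans (S.child_lt m x hx).le, h.2.trans (S.scope_subset_of_mem_children hx)⟩
  rcases hm : S.kind m
  · simp only [S.value_of_kind_sum _ _ hm]
    refine (IsNonnegAffine.sum fun x hx =>
      (IsNonnegAffine.ite_id _ (hw m x)).mul (ih x (S.child_lt m x hx)) ?_).mono ?_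
    · rintro ⟨⟨rfl, -⟩, hkx, -⟩
      exact (S.child_lt m x hx).not_ge hkx
    · rintro ⟨x, hx, ⟨rfl, -⟩ | h⟩
      · exact ⟨le_rfl, subset_rfl⟩
      · exact hdesc x hx h
  · simp only [S.value_of_kind_prod _ _ hm]
    refine (IsNonnegAffine.prod (fun x hx => ih x (S.child_lt m x hx)) ?_).mono
      fun ⟨x, hx, h⟩ => hdesc x hx h
    rintro x hx y hy hxy ⟨⟨-, hkx⟩, -, hky⟩
    obtain ⟨v, hv⟩ := S.scope_nonempty k
    exact Finset.disjoint_left.mp (hD m hm x hx y hy hxy) (hkx hv) (hky hv)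
  · simpa only [S.value_of_kind_leaf _ _ hm] using IsNonnegAffine.const _ (hleaf m)

end SPN

theorem SPN.value_affine_in_each_weight_general {N n : ℕ} (S : SPN N n)
    (hD : S.Decomposable)
    (leaf : Fin N → ℝ) (hleaf : ∀ k, 0 < leaf k)
    (w : Fin N → Fin N → ℝ) (hw : ∀ k j, 0 < w k j)
    (k j : Fin N) :
    ∃ a b : ℝ, 0 ≤ a ∧ 0 ≤ b ∧ ∀ t : ℝ,
      S.value leaf (fun k' j' => if k' = k ∧ j' = j then t else w k' j') S.root
        = a * t + b := by
  obtain ⟨a, b, ha, hb, -, hval⟩ := S.isNonnegAffine_value_update_weight hD leaf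
    (fun k => (hleaf k).le) w (fun k j => (hw k j).le) k j S.root
  exact ⟨a, b, ha, hb, hval⟩

/-- The network polynomial of a complete and decomposable SPN is multilinear in
the edge weights with nonnegative coefficients: as a function of any single edge weight
`w_{k,j}` (all other weights and the leaf values being positive), the root value is affine,
`a·t + b`, with nonnegative coefficients `a, b`. -/
theorem SPN.value_affine_in_each_weight {N n : ℕ} (S : SPN N n)
    (hC : S.Complete) (hD : S.Decomposable)
    (leaf : Fin N → ℝ) (hleaf : ∀ k, 0 < leaf k)
    (w : Fin N → Fin N → ℝ) (hw : ∀ k j, 0 < w k j)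
    (k j : Fin N) :
    ∃ a b : ℝ, 0 ≤ a ∧ 0 ≤ b ∧ ∀ t : ℝ,
      S.value leaf (fun k' j' => if k' = k ∧ j' = j then t else w k' j') S.root
        = a * t + b :=
  SPN.value_affine_in_each_weight_general S hD leaf hleaf w hw k j
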